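/- arXiv:1205.2184 — 2 statements merged into one kernel-verified Lean document; each statement's English description precedes it below -/
import Mathlib

section
/- Let τ > 0, λ ≥ 0, t > 0, let Λ be a probability measure on [-τ, 0], and let f : [-τ, t] → [0, ∞) be continuous. Then ∫₀ᵗ e^{-λs} (∫_{-τ}^0 f(s+θ) Λ(dθ)) ds ≤ ∫_{-τ}^0 f(θ) dθ + ∫₀ᵗ e^{-λs} f(s) ds. -/
/-!
Dominate the weight: for `s ≥ 0` and `θ ≤ 0`, `e^{-λs} ≤ e^{-λ max(s+θ, 0)}`, so the inner integral
is bounded by `∫₀ᵗ g(s+θ) ds` with `g u = e^{-λ max(u, 0)} f u`. Translating, this is the integral of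
`g ≥ 0` over `[θ, t+θ] ⊆ [-τ, 0] ∪ [0, t]`, and on these two pieces `g` is `f` and `e^{-λu} f u`.
The bound holds for every `θ` in the support of `Λ`, so Fubini finishes the proof.
-/

open MeasureTheory Set

theorem setIntegral_Icc_comp_add_right {E : Type*} [NormedAddCommGroup E] [NormedSpace ℝ E]
    (F : ℝ → E) (a b c : ℝ) :
    ∫ x in Icc a b, F (x + c) = ∫ y in Icc (a + c) (b + c), F y := by
  simpa [preimage_add_const_Icc] using
    (measurePreserving_add_right volume c).setIntegral_preimage_emb
      (measurableEmbedding_addRight c) F (Icc (a + c) (b + c))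

theorem setIntegral_Icc_comp_add_right_le {g : ℝ → ℝ} (hg : Continuous g) (hg0 : ∀ u, 0 ≤ g u)
    {τ t θ : ℝ} (hθ : θ ∈ Icc (-τ) 0) :
    ∫ s in Icc 0 t, g (s + θ) ≤ (∫ u in Icc (-τ) 0, g u) + ∫ u in Icc 0 t, g u := by
  have hsub : Icc θ (t + θ) ⊆ Icc (-τ) 0 ∪ Ioc 0 t := fun u hu => by
    rcases le_or_gt u 0 with hu0 | hu0
    · exact Or.inl ⟨hθ.1.trans hu.1, hu0⟩
    · exact Or.inr ⟨hu0, hu.2.trans (by linarith [hθ.2])⟩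
  have hdisj : Disjoint (Icc (-τ) 0) (Ioc 0 t) :=
    disjoint_left.2 fun u hu hu' => (not_lt.2 hu.2) hu'.1
  calc ∫ s in Icc 0 t, g (s + θ)
      = ∫ u in Icc θ (t + θ), g u := by
        rw [setIntegral_Icc_comp_add_right, zero_add]
    _ ≤ ∫ u in Icc (-τ) 0 ∪ Ioc 0 t, g u :=
        setIntegral_mono_set (hg.integrableOn_Icc.union hg.integrableOn_Ioc)
          (Filter.Eventually.of_forall hg0) hsub.eventuallyLE
    _ = (∫ u in Icc (-τ) 0, g u) + ∫ u in Icc 0 t, g u := by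
        rw [setIntegral_union hdisj measurableSet_Ioc hg.integrableOn_Icc hg.integrableOn_Ioc,
          integral_Icc_eq_integral_Ioc (x := (0 : ℝ))]

theorem exp_neg_mul_le_exp_neg_mul_max {lam s θ : ℝ} (hlam : 0 ≤ lam) (hs : 0 ≤ s) (hθ : θ ≤ 0) :
    Real.exp (-lam * s) ≤ Real.exp (-lam * max (s + θ) 0) :=
  Real.exp_le_exp.2 <| by
    simpa only [neg_mul, neg_le_neg_iff] using
      mul_le_mul_of_nonneg_left (max_le (by linarith) hs) hlam

theorem setIntegral_exp_mul_comp_add_right_le {τ lam t θ : ℝ} (hlam : 0 ≤ lam) {f : ℝ → ℝ}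
    (hf : Continuous f) (hf0 : ∀ s, 0 ≤ f s) (hθ : θ ∈ Icc (-τ) 0) :
    ∫ s in Icc 0 t, Real.exp (-lam * s) * f (s + θ)
      ≤ (∫ u in Icc (-τ) 0, f u) + ∫ u in Icc 0 t, Real.exp (-lam * u) * f u := by
  set g : ℝ → ℝ := fun u => Real.exp (-lam * max u 0) * f u
  have hg : Continuous g := by fun_prop
  have hg0 (u : ℝ) : 0 ≤ g u := mul_nonneg (Real.exp_nonneg _) (hf0 u)
  have hg_neg : EqOn g f (Icc (-τ) 0) := fun u hu => by simp [g, max_eq_right hu.2]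
  have hg_pos : EqOn g (fun u => Real.exp (-lam * u) * f u) (Icc 0 t) := fun u hu => by
    simp [g, max_eq_left hu.1]
  calc ∫ s in Icc 0 t, Real.exp (-lam * s) * f (s + θ)
      ≤ ∫ s in Icc 0 t, g (s + θ) :=
        setIntegral_mono_on (by fun_prop : Continuous _).integrableOn_Icc
          (hg.comp (continuous_add_const θ)).integrableOn_Icc measurableSet_Icc
          fun s hs => mul_le_mul_of_nonneg_right
            (exp_neg_mul_le_exp_neg_mul_max hlam hs.1 hθ.2) (hf0 _)
    _ ≤ (∫ u in Icc (-τ) 0, g u) + ∫ u in Icc 0 t, g u :=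
        setIntegral_Icc_comp_add_right_le hg hg0 hθ
    _ = (∫ u in Icc (-τ) 0, f u) + ∫ u in Icc 0 t, Real.exp (-lam * u) * f u := by
        rw [setIntegral_congr_fun measurableSet_Icc hg_neg,
          setIntegral_congr_fun measurableSet_Icc hg_pos]

theorem Continuous.integrable_restrict_prod_of_ae_mem {X Y : Type*}
    [TopologicalSpace X] [MeasurableSpace X] [TopologicalSpace Y] [MeasurableSpace Y]
    [OpensMeasurableSpace (X × Y)] [T2Space X] [T2Space Y]
    {μ : Measure X} {ν : Measure Y} [IsFiniteMeasureOnCompacts μ] [SFinite μ] [IsFiniteMeasure ν]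
    {F : X × Y → ℝ} (hF : Continuous F) {s : Set X} {k : Set Y} (hs : IsCompact s)
    (hk : IsCompact k) (hν : ∀ᵐ y ∂ν, y ∈ k) :
    Integrable F ((μ.restrict s).prod ν) := by
  rw [← Measure.restrict_eq_self_of_ae_mem hν, Measure.prod_restrict]
  exact hF.continuousOn.integrableOn_compact (hs.prod hk)

theorem integral_integral_le_of_ae_le {α β : Type*} [MeasurableSpace α] [MeasurableSpace β]
    {μ : Measure α} {ν : Measure β} [SFinite μ] [IsProbabilityMeasure ν] {F : α → β → ℝ}
    (hF : Integrable (Function.uncurry F) (μ.prod ν)) {B : ℝ}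
    (hB : ∀ᵐ y ∂ν, ∫ x, F x y ∂μ ≤ B) :
    ∫ x, ∫ y, F x y ∂ν ∂μ ≤ B :=
  calc ∫ x, ∫ y, F x y ∂ν ∂μ
      = ∫ y, ∫ x, F x y ∂μ ∂ν := integral_integral_swap hF
    _ ≤ ∫ _, B ∂ν := integral_mono_ae hF.integral_prod_right (integrable_const B) hB
    _ = B := by simp

theorem shift_estimate_general (τ lam t : ℝ) (hlam : 0 ≤ lam)
    (Λ : Measure ℝ) [IsProbabilityMeasure Λ] (hΛ : Λ (Set.Icc (-τ) 0) = 1)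
    (f : ℝ → ℝ) (hf : Continuous f) (hf0 : ∀ s, 0 ≤ f s) :
    (∫ s in Set.Icc (0:ℝ) t, Real.exp (-lam * s) * ∫ θ, f (s + θ) ∂Λ)
      ≤ (∫ θ in Set.Icc (-τ) (0:ℝ), f θ)
        + ∫ s in Set.Icc (0:ℝ) t, Real.exp (-lam * s) * f s := by
  have hsupp : ∀ᵐ θ ∂Λ, θ ∈ Icc (-τ) 0 := (mem_ae_iff_prob_eq_one measurableSet_Icc).2 hΛ
  simp_rw [← integral_const_mul]
  refine integral_integral_le_of_ae_le ?_ ?_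
  · exact Continuous.integrable_restrict_prod_of_ae_mem (by fun_prop) isCompact_Icc
      isCompact_Icc hsupp
  · filter_upwards [hsupp] with θ hθ
    exact setIntegral_exp_mul_comp_add_right_le hlam hf hf0 hθ

theorem shift_estimate (τ lam t : ℝ) (hτ : 0 < τ) (hlam : 0 ≤ lam) (ht : 0 < t)
    (Λ : Measure ℝ) [IsProbabilityMeasure Λ] (hΛ : Λ (Set.Icc (-τ) 0) = 1)
    (f : ℝ → ℝ) (hf : Continuous f) (hf0 : ∀ s, 0 ≤ f s) :
    (∫ s in Set.Icc (0:ℝ) t, Real.exp (-lam * s) * ∫ θ, f (s + θ) ∂Λ)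
      ≤ (∫ θ in Set.Icc (-τ) (0:ℝ), f θ)
        + ∫ s in Set.Icc (0:ℝ) t, Real.exp (-lam * s) * f s :=
  shift_estimate_general τ lam t hlam Λ hΛ f hf hf0
end

section
/- Let τ > 0, k ∈ [0,1), and let G : C([-τ,0]; ℝ^d) → ℝ^d satisfy |G(ξ) - G(η)| ≤ k ρ₂(ξ, η), where ρ₂(ξ,η)² = (1/τ)∫_{-τ}^0 |ξ(θ)-η(θ)|² dθ. Let x, y : [-τ, t] → ℝ^d be continuous, λ ≥ 0, and M(s) = (x(s)-y(s)) + (G(y_s) - G(x_s)) with x_s(θ) = x(s+θ). Then ∫₀ᵗ e^{-λs} |M(s)|² ds ≤ (1+k)² ∫₀ᵗ e^{-λs} |x(s)-y(s)|² ds + (1+k)k τ ρ₂(x₀, y₀)². -/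
open MeasureTheory

noncomputable def rho2 {d : ℕ} (τ : ℝ) (ξ η : C(Set.Icc (-τ) (0:ℝ), EuclideanSpace ℝ (Fin d))) : ℝ :=
  Real.sqrt ((1 / τ) * ∫ θ : Set.Icc (-τ) (0:ℝ), ‖ξ θ - η θ‖ ^ 2 ∂(MeasureTheory.volume.comap Subtype.val))

noncomputable def pathSegment {d : ℕ} (τ : ℝ) (x : ℝ → EuclideanSpace ℝ (Fin d)) (hx : Continuous x)
    (s : ℝ) : C(Set.Icc (-τ) (0:ℝ), EuclideanSpace ℝ (Fin d)) :=
  ContinuousMap.mk (fun θ : Set.Icc (-τ) (0:ℝ) => x (s + θ))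
    (hx.comp (continuous_const.add continuous_subtype_val))

/-
Pointwise `‖M s‖ ≤ ‖x s - y s‖ + k ρ₂(x_s, y_s)` and `(a + k b)² ≤ (1 + k)(a² + k b²)`.
Since `ρ₂(x_s, y_s)²` is the mean of `‖x - y‖²` over `[s - τ, s]`, and
`e^{-λ s} ≤ e^{-λ max(u, 0)}` for `u ≤ s`, integrating these windows over `s ∈ [0, t]`
counts each `u ∈ [-τ, t]` at most `τ` times:
`∫₀ᵗ e^{-λ s} ρ₂(x_s, y_s)² ds ≤ ∫₀ᵗ e^{-λ s} ‖x s - y s‖² ds + τ ρ₂(x₀, y₀)²`.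
-/

open Real

lemma rho2_comm {d : ℕ} (τ : ℝ) (ξ η : C(Set.Icc (-τ) (0:ℝ), EuclideanSpace ℝ (Fin d))) :
    rho2 τ ξ η = rho2 τ η ξ := by
  simp only [rho2, norm_sub_rev]

lemma rho2_pathSegment_sq {d : ℕ} {τ : ℝ} (hτ : 0 ≤ τ) {x y : ℝ → EuclideanSpace ℝ (Fin d)}
    (hx : Continuous x) (hy : Continuous y) (s : ℝ) :
    rho2 τ (pathSegment τ x hx s) (pathSegment τ y hy s) ^ 2
      = (1 / τ) * ∫ u in (s - τ)..s, ‖x u - y u‖ ^ 2 := by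
  have hsegment : ∫ θ : Set.Icc (-τ) (0:ℝ),
      ‖pathSegment τ x hx s θ - pathSegment τ y hy s θ‖ ^ 2 ∂(volume.comap Subtype.val)
        = ∫ u in (s - τ)..s, ‖x u - y u‖ ^ 2 := by
    refine (integral_subtype_comap (measurableSet_Icc (a := -τ) (b := 0))
      fun θ => ‖x (s + θ) - y (s + θ)‖ ^ 2).trans ?_
    rw [integral_Icc_eq_integral_Ioc, ← intervalIntegral.integral_of_le (neg_nonpos.2 hτ),
      intervalIntegral.integral_comp_add_left (fun u => ‖x u - y u‖ ^ 2) s, add_zero,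
      ← sub_eq_add_neg]
  have hnonneg : 0 ≤ ∫ u in (s - τ)..s, ‖x u - y u‖ ^ 2 :=
    intervalIntegral.integral_nonneg (by linarith) fun u _ => by positivity
  rw [rho2, hsegment, sq_sqrt (by positivity)]

lemma sq_le_one_add_mul_mul {m a b k : ℝ} (hk : 0 ≤ k) (hm : 0 ≤ m) (h : m ≤ a + k * b) :
    m ^ 2 ≤ (1 + k) * (a ^ 2 + k * b ^ 2) := by
  have hsq := pow_le_pow_left₀ hm h 2
  nlinarith [mul_nonneg hk (sq_nonneg (a - b))]

lemma continuous_integral_window {f : ℝ → ℝ} (hf : Continuous f) (τ : ℝ) :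
    Continuous fun s => ∫ u in (s - τ)..s, f u := by
  have hint : ∀ a b, IntervalIntegrable f volume a b := hf.intervalIntegrable
  have hprim := intervalIntegral.continuous_primitive hint 0
  exact (hprim.sub (hprim.comp (continuous_sub_right τ))).congr fun s =>
    intervalIntegral.integral_interval_sub_left (hint _ _) (hint _ _)

/-- Each `u ∈ [-τ, t]` lies in at most a length-`τ` set of windows `[s - τ, s]`. -/
lemma integral_integral_window_le {h : ℝ → ℝ} (hh : Continuous h) (h0 : ∀ u, 0 ≤ h u)
    {τ : ℝ} (hτ : 0 ≤ τ) (t : ℝ) :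
    ∫ s in (0:ℝ)..t, ∫ u in (s - τ)..s, h u ≤ τ * ∫ u in (-τ)..t, h u := by
  have hint : ∀ a b, IntervalIntegrable h volume a b := hh.intervalIntegrable
  set Φ : ℝ → ℝ := fun s => ∫ u in (-τ)..s, h u
  have hΦ : Continuous Φ := intervalIntegral.continuous_primitive hint (-τ)
  have hΦint : ∀ a b, IntervalIntegrable Φ volume a b := hΦ.intervalIntegrable
  have hwindow : ∀ s, ∫ u in (s - τ)..s, h u = Φ s - Φ (s - τ) := fun s =>
    (intervalIntegral.integral_interval_sub_left (hint _ _) (hint _ _)).symm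
  have hmono : Monotone Φ := fun a b hab => sub_nonneg.1 <| by
    rw [intervalIntegral.integral_interval_sub_left (hint _ _) (hint _ _)]
    exact intervalIntegral.integral_nonneg hab fun u _ => h0 u
  have hupper : ∫ s in (t - τ)..t, Φ s ≤ τ * Φ t := by
    simpa using intervalIntegral.integral_mono_on (by linarith) (hΦint (t - τ) t)
      intervalIntegrable_const fun s hs => hmono hs.2
  have hlower : 0 ≤ ∫ s in (-τ)..0, Φ s :=
    intervalIntegral.integral_nonneg (neg_nonpos.2 hτ) fun s hs =>
      intervalIntegral.integral_nonneg hs.1 fun u _ => h0 u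
  have hshift : ∫ s in (0:ℝ)..t, Φ (s - τ) = ∫ s in (-τ)..(t - τ), Φ s := by
    rw [intervalIntegral.integral_comp_sub_right, zero_sub]
  have split₁ :=
    intervalIntegral.integral_add_adjacent_intervals (hΦint (-τ) 0) (hΦint 0 (t - τ))
  have split₂ :=
    intervalIntegral.integral_add_adjacent_intervals (hΦint 0 (t - τ)) (hΦint (t - τ) t)
  rw [intervalIntegral.integral_congr fun s _ => hwindow s,
    intervalIntegral.integral_sub (hΦint 0 t) (g := fun s => Φ (s - τ))
      ((hΦ.comp (continuous_sub_right τ)).intervalIntegrable 0 t), hshift]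
  linarith

lemma integral_exp_mul_window_le {f : ℝ → ℝ} (hf : Continuous f) (hf0 : ∀ u, 0 ≤ f u)
    {τ lam t : ℝ} (hτ : 0 < τ) (hlam : 0 ≤ lam) (ht : 0 ≤ t) :
    ∫ s in (0:ℝ)..t, exp (-lam * s) * ((1 / τ) * ∫ u in (s - τ)..s, f u)
      ≤ (∫ s in (0:ℝ)..t, exp (-lam * s) * f s) + ∫ u in (-τ)..0, f u := by
  set h : ℝ → ℝ := fun u => exp (-lam * max u 0) * f u
  have hh : Continuous h := by fun_prop
  have hweight : ∀ s ∈ Set.Icc 0 t, exp (-lam * s) * ∫ u in (s - τ)..s, f u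
      ≤ ∫ u in (s - τ)..s, h u := fun s hs => by
    rw [← intervalIntegral.integral_const_mul]
    refine intervalIntegral.integral_mono_on (by linarith)
      ((hf.intervalIntegrable _ _).const_mul _) (hh.intervalIntegrable _ _) fun u hu => ?_
    have hlag : -lam * s ≤ -lam * max u 0 := by nlinarith [max_le hu.2 hs.1]
    exact mul_le_mul_of_nonneg_right (exp_le_exp.2 hlag) (hf0 u)
  have hsplit : ∫ u in (-τ)..t, h u
      = (∫ u in (-τ)..0, f u) + ∫ s in (0:ℝ)..t, exp (-lam * s) * f s := by
    rw [← intervalIntegral.integral_add_adjacent_intervals (hh.intervalIntegrable (-τ) 0)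
      (hh.intervalIntegrable 0 t)]
    congr 1 <;> refine intervalIntegral.integral_congr fun u hu => ?_
    · rw [Set.uIcc_of_le (by linarith)] at hu
      simp [h, max_eq_right hu.2]
    · rw [Set.uIcc_of_le ht] at hu
      simp [h, max_eq_left hu.1]
  calc ∫ s in (0:ℝ)..t, exp (-lam * s) * ((1 / τ) * ∫ u in (s - τ)..s, f u)
      = (1 / τ) * ∫ s in (0:ℝ)..t, exp (-lam * s) * ∫ u in (s - τ)..s, f u := by
        rw [← intervalIntegral.integral_const_mul]; congr 1; ext s; ring
    _ ≤ (1 / τ) * ∫ s in (0:ℝ)..t, ∫ u in (s - τ)..s, h u := by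
        gcongr
        have hlhs : Continuous fun s => exp (-lam * s) * ∫ u in (s - τ)..s, f u :=
          (continuous_exp.comp (by fun_prop)).mul (continuous_integral_window hf τ)
        exact intervalIntegral.integral_mono_on ht (hlhs.intervalIntegrable _ _)
          ((continuous_integral_window hh τ).intervalIntegrable _ _) hweight
    _ ≤ (1 / τ) * (τ * ∫ u in (-τ)..t, h u) := by
        gcongr
        exact integral_integral_window_le hh (fun u => mul_nonneg (exp_nonneg _) (hf0 u)) hτ.le t
    _ = _ := by rw [hsplit, add_comm]; field_simp

lemma setIntegral_exp_mul_le_of_le_window {m f : ℝ → ℝ} (hf : Continuous f)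
    (hf0 : ∀ u, 0 ≤ f u) {τ lam k : ℝ} (hτ : 0 < τ) (hlam : 0 ≤ lam) (hk : 0 ≤ k) (t : ℝ)
    (hm0 : ∀ s, 0 ≤ m s)
    (hm : ∀ s, m s ≤ (1 + k) * (f s + k * ((1 / τ) * ∫ u in (s - τ)..s, f u))) :
    ∫ s in Set.Icc 0 t, exp (-lam * s) * m s
      ≤ (1 + k) ^ 2 * (∫ s in Set.Icc 0 t, exp (-lam * s) * f s)
        + (1 + k) * k * ∫ u in (-τ)..0, f u := by
  rcases lt_or_ge t 0 with ht | ht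
  · have hinitial : 0 ≤ ∫ u in (-τ)..0, f u :=
      intervalIntegral.integral_nonneg (by linarith) fun u _ => hf0 u
    simp only [Set.Icc_eq_empty_of_lt ht, Measure.restrict_empty, integral_zero_measure]
    positivity
  set W : ℝ → ℝ := fun s => (1 / τ) * ∫ u in (s - τ)..s, f u
  have hW : Continuous W := continuous_const.mul (continuous_integral_window hf τ)
  have hweighted : ∀ {g : ℝ → ℝ}, Continuous g → Continuous fun s => exp (-lam * s) * g s :=
    fun hg => (continuous_exp.comp (by fun_prop)).mul hg
  have hbound : Continuous fun s =>
      (1 + k) * (exp (-lam * s) * f s) + (1 + k) * k * (exp (-lam * s) * W s) := by fun_prop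
  have hpointwise : ∀ s, exp (-lam * s) * m s
      ≤ (1 + k) * (exp (-lam * s) * f s) + (1 + k) * k * (exp (-lam * s) * W s) := fun s => by
    nlinarith [mul_le_mul_of_nonneg_left (hm s) (exp_nonneg (-lam * s))]
  have hintegrate := integral_mono_of_nonneg
    (ae_of_all _ fun s => mul_nonneg (exp_nonneg _) (hm0 s))
    (hbound.integrableOn_Icc (μ := volume) (a := 0) (b := t)) (ae_of_all _ hpointwise)
  simp only [integral_Icc_eq_integral_Ioc, ← intervalIntegral.integral_of_le ht] at hintegrate ⊢
  rw [intervalIntegral.integral_add (((hweighted hf).intervalIntegrable 0 t).const_mul _)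
    (((hweighted hW).intervalIntegrable 0 t).const_mul _), intervalIntegral.integral_const_mul,
    intervalIntegral.integral_const_mul] at hintegrate
  nlinarith [integral_exp_mul_window_le hf hf0 hτ hlam ht, mul_nonneg (by linarith : 0 ≤ 1 + k) hk]

theorem lemma30_2_general (τ lam t : ℝ) (hτ : 0 < τ) (hlam : 0 ≤ lam) (d : ℕ)
    (k : ℝ) (hk0 : 0 ≤ k)
    (G : C(Set.Icc (-τ) (0:ℝ), EuclideanSpace ℝ (Fin d)) → EuclideanSpace ℝ (Fin d))
    (hG : ∀ ξ η, ‖G ξ - G η‖ ≤ k * rho2 τ ξ η)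
    (x y : ℝ → EuclideanSpace ℝ (Fin d)) (hx : Continuous x) (hy : Continuous y)
    (M : ℝ → EuclideanSpace ℝ (Fin d))
    (hM : ∀ s, M s = (x s - y s) + (G (pathSegment τ y hy s) - G (pathSegment τ x hx s))) :
    (∫ s in Set.Icc (0:ℝ) t, Real.exp (-lam * s) * ‖M s‖ ^ 2)
      ≤ (1 + k) ^ 2 * (∫ s in Set.Icc (0:ℝ) t, Real.exp (-lam * s) * ‖x s - y s‖ ^ 2)
        + (1 + k) * k * τ * (rho2 τ (pathSegment τ x hx 0) (pathSegment τ y hy 0)) ^ 2 := by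
  have hnorm : ∀ s,
      ‖M s‖ ≤ ‖x s - y s‖ + k * rho2 τ (pathSegment τ x hx s) (pathSegment τ y hy s) := fun s =>
    calc ‖M s‖ ≤ ‖x s - y s‖ + ‖G (pathSegment τ y hy s) - G (pathSegment τ x hx s)‖ := by
          rw [hM]; exact norm_add_le _ _
      _ ≤ _ := by
          rw [rho2_comm]; gcongr; exact hG _ _
  have hinitial := rho2_pathSegment_sq hτ.le hx hy 0
  rw [zero_sub] at hinitial
  have hbound := setIntegral_exp_mul_le_of_le_window (m := fun s => ‖M s‖ ^ 2)
    (f := fun u => ‖x u - y u‖ ^ 2) (by fun_prop)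
    (fun u => by positivity) hτ hlam hk0 t (fun s => by positivity) fun s => by
      rw [← rho2_pathSegment_sq hτ.le hx hy]
      exact sq_le_one_add_mul_mul hk0 (norm_nonneg _) (hnorm s)
  rw [hinitial]
  convert hbound using 2
  field_simp

theorem lemma30_2 (τ lam t : ℝ) (hτ : 0 < τ) (hlam : 0 ≤ lam) (ht : 0 < t) (d : ℕ)
    (k : ℝ) (hk0 : 0 ≤ k) (hk1 : k < 1)
    (G : C(Set.Icc (-τ) (0:ℝ), EuclideanSpace ℝ (Fin d)) → EuclideanSpace ℝ (Fin d))
    (hG : ∀ ξ η, ‖G ξ - G η‖ ≤ k * rho2 τ ξ η)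
    (x y : ℝ → EuclideanSpace ℝ (Fin d)) (hx : Continuous x) (hy : Continuous y)
    (M : ℝ → EuclideanSpace ℝ (Fin d))
    (hM : ∀ s, M s = (x s - y s) + (G (pathSegment τ y hy s) - G (pathSegment τ x hx s))) :
    (∫ s in Set.Icc (0:ℝ) t, Real.exp (-lam * s) * ‖M s‖ ^ 2)
      ≤ (1 + k) ^ 2 * (∫ s in Set.Icc (0:ℝ) t, Real.exp (-lam * s) * ‖x s - y s‖ ^ 2)
        + (1 + k) * k * τ * (rho2 τ (pathSegment τ x hx 0) (pathSegment τ y hy 0)) ^ 2 :=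
  lemma30_2_general τ lam t hτ hlam d k hk0 G hG x y hx hy M hM
end
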